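/- Fix real constants γ > 0 and δ > 0 and a sequence ξ : ℕ → [0,1). Define a coupled sequence (A_k, B_k, X_k, Y_k) in ℕ⁴ recursively as follows, with λ_k := γ(A_k+B_k)+δ·A_k·B_k: if max{A_k,B_k} = 0 or max{X_k,Y_k} = 0 the state is unchanged; otherwise set (A_{k+1},B_{k+1}) = (A_k−1,B_k−1) if ξ_{k+1} ∈ [0, δA_kB_k/λ_k), (A_k+1,B_k) if ξ_{k+1} ∈ [δA_kB_k/λ_k, 1 − γB_k/λ_k), and (A_k,B_k+1) if ξ_{k+1} ∈ [1 − γB_k/λ_k, 1); and set (X_{k+1},Y_{k+1}) = (X_k,Y_k) if ξ_{k+1} ∈ [0, δA_kB_k/λ_k), (X_k+1,Y_k) if ξ_{k+1} ∈ [δA_kB_k/λ_k, 1 − (γ(A_k+B_k)/λ_k)·(Y_k/(X_k+Y_k))), and (X_k,Y_k+1) if ξ_{k+1} ∈ [1 − (γ(A_k+B_k)/λ_k)·(Y_k/(X_k+Y_k)), 1). If X_0 = A_0 ≥ B_0 = Y_0 and X_k ≥ Y_k for all 0 ≤ k ≤ K, then X_k − Y_k ≤ A_k − B_k for all 0 ≤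 k ≤ K (differences taken in ℤ). -/

import Mathlib

/-!
As long as `Y ≤ X`, every transition of the coupling preserves
`B ≤ Y`, `X + B ≤ A + Y` and `B X ≤ A Y`, all of which hold initially.
The last inequality says that the share of `Y` in the Yule population is at least the share
of `B` in the `A`-`B` population, so the interval of `ξ` on which `B` is born lies inside the
one on which `Y` is born. Hence a birth of `B` always comes with a birth of `Y`, a birth of `A`
with a birth of `X` or `Y`, and a death of the pair leaves `X` and `Y` unchanged; the second
inequality is the claim.
-/

open Classical in
/-- One step of the discrete-time coupling of the A-B chain with two parallel Yule
processes X and Y. The state is `(A, B, X, Y)`, `x` is the uniform random variable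
`ξ_{k+1}`, and `lam = γ(A+B) + δAB`. -/
noncomputable def abxyStep (γ δ : ℝ) (s : ℕ × ℕ × ℕ × ℕ) (x : ℝ) : ℕ × ℕ × ℕ × ℕ :=
  let a := s.1
  let b := s.2.1
  let X := s.2.2.1
  let Y := s.2.2.2
  if max a b = 0 ∨ max X Y = 0 then s
  else
    let lam : ℝ := γ * ((a : ℝ) + (b : ℝ)) + δ * (a : ℝ) * (b : ℝ)
    let ab : ℕ × ℕ :=
      if x < δ * (a : ℝ) * (b : ℝ) / lam then (a - 1, b - 1)
      else if x < 1 - γ * (b : ℝ) / lam then (a + 1, b)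
      else (a, b + 1)
    let xy : ℕ × ℕ :=
      if x < δ * (a : ℝ) * (b : ℝ) / lam then (X, Y)
      else if x < 1 - (γ * ((a : ℝ) + (b : ℝ)) / lam) * ((Y : ℝ) / ((X : ℝ) + (Y : ℝ)))
        then (X + 1, Y)
      else (X, Y + 1)
    (ab.1, ab.2, xy.1, xy.2)

/-- The coupled trajectory: the `(k+1)`-th transition is driven by `ξ (k+1)`. -/
noncomputable def abxyTraj (γ δ : ℝ) (ξ : ℕ → ℝ) (s0 : ℕ × ℕ × ℕ × ℕ) :
    ℕ → ℕ × ℕ × ℕ × ℕ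
  | 0 => s0
  | k + 1 => abxyStep γ δ (abxyTraj γ δ ξ s0 k) (ξ (k + 1))

theorem le_add_mul_div_add_of_mul_le {a b X Y : ℝ} (hXY : 0 < X + Y) (h : b * X ≤ a * Y) :
    b ≤ (a + b) * (Y / (X + Y)) := by
  rw [mul_div_assoc', le_div_iff₀ hXY]
  linarith

theorem abxyStep_cases {γ δ x : ℝ} (hγ : 0 ≤ γ) (hδ : 0 ≤ δ) (hx : 0 ≤ x) {a b X Y : ℕ}
    (hbX : b * X ≤ a * Y) :
    abxyStep γ δ (a, b, X, Y) x = (a, b, X, Y) ∨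
    (0 < a ∧ 0 < b ∧ abxyStep γ δ (a, b, X, Y) x = (a - 1, b - 1, X, Y)) ∨
    abxyStep γ δ (a, b, X, Y) x = (a + 1, b, X + 1, Y) ∨
    abxyStep γ δ (a, b, X, Y) x = (a + 1, b, X, Y + 1) ∨
    abxyStep γ δ (a, b, X, Y) x = (a, b + 1, X, Y + 1) := by
  simp only [abxyStep]
  split_ifs with hfrozen hdeath
  · exact Or.inl rfl
  · refine Or.inr (Or.inl ⟨Nat.pos_of_ne_zero ?_, Nat.pos_of_ne_zero ?_, rfl⟩) <;>
      rintro rfl <;>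
      simp only [Nat.cast_zero, mul_zero, zero_mul, zero_div] at hdeath <;> linarith
  · exact Or.inr (Or.inr (Or.inl rfl))
  · exact Or.inr (Or.inr (Or.inr (Or.inl rfl)))
  · -- `b X ≤ a Y` puts the threshold for a birth of `B` below the one for a birth of `Y`.
    exfalso
    have hXY : (0 : ℝ) < X + Y := by
      simp only [Nat.max_eq_zero_iff, not_or] at hfrozen
      have : 0 < X + Y := by omega
      exact_mod_cast this
    have hlam : 0 ≤ γ * ((a : ℝ) + b) + δ * a * b := by positivity
    have hbXR : (b : ℝ) * X ≤ a * Y := by exact_mod_cast hbX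
    have := mul_le_mul_of_nonneg_left (le_add_mul_div_add_of_mul_le hXY hbXR)
      (div_nonneg hγ hlam)
    rw [← mul_assoc, ← mul_div_right_comm, ← mul_div_right_comm] at this
    linarith
  · exact Or.inr (Or.inr (Or.inr (Or.inr rfl)))

def CouplingInv : ℕ × ℕ × ℕ × ℕ → Prop
  | (a, b, X, Y) => b ≤ Y ∧ X + b ≤ a + Y ∧ b * X ≤ a * Y

theorem CouplingInv.abxyStep {γ δ x : ℝ} (hγ : 0 ≤ γ) (hδ : 0 ≤ δ) (hx : 0 ≤ x)
    {s : ℕ × ℕ × ℕ × ℕ} (h : CouplingInv s) (hYX : s.2.2.2 ≤ s.2.2.1)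
    (hYX' : (abxyStep γ δ s x).2.2.2 ≤ (abxyStep γ δ s x).2.2.1) :
    CouplingInv (abxyStep γ δ s x) := by
  obtain ⟨a, b, X, Y⟩ := s
  obtain ⟨hbY, hsum, hprod⟩ := h
  rcases abxyStep_cases hγ hδ hx hprod with h | ⟨ha, hb, h⟩ | h | h | h <;>
    rw [h] at hYX' ⊢ <;> simp only [CouplingInv] at hYX hYX' ⊢
  · exact ⟨hbY, hsum, hprod⟩
  · obtain ⟨a, rfl⟩ := Nat.exists_eq_add_of_lt ha
    obtain ⟨b, rfl⟩ := Nat.exists_eq_add_of_lt hb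
    refine ⟨by omega, by omega, ?_⟩
    simp only [zero_add, Nat.add_sub_cancel] at hprod ⊢
    nlinarith
  · exact ⟨hbY, by omega, by nlinarith⟩
  · exact ⟨by omega, by omega, by nlinarith⟩
  · -- `a (Y + 1) - (b + 1) X = (Y - b) (X - Y - 1) + (a + Y - X - b) (Y + 1)`
    refine ⟨by omega, by omega, ?_⟩
    nlinarith

theorem CouplingInv.abxyTraj {γ δ : ℝ} (hγ : 0 ≤ γ) (hδ : 0 ≤ δ) {ξ : ℕ → ℝ}
    (hξ : ∀ k, 0 ≤ ξ k) {s0 : ℕ × ℕ × ℕ × ℕ} (h0 : CouplingInv s0) {K : ℕ}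
    (hYX : ∀ k ≤ K, (abxyTraj γ δ ξ s0 k).2.2.2 ≤ (abxyTraj γ δ ξ s0 k).2.2.1) :
    ∀ k ≤ K, CouplingInv (abxyTraj γ δ ξ s0 k) := by
  intro k
  induction k with
  | zero => exact fun _ => h0
  | succ k ih =>
    intro hk
    exact (ih (by omega)).abxyStep hγ hδ (hξ _) (hYX k (by omega)) (hYX (k + 1) hk)

theorem ab_yule_coupling_general (γ δ : ℝ) (hγ : 0 < γ) (hδ : 0 < δ)
    (ξ : ℕ → ℝ) (hξ : ∀ k, 0 ≤ ξ k ∧ ξ k < 1)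
    (A B X Y : ℕ → ℕ)
    (hA : ∀ k, A k = (abxyTraj γ δ ξ (A 0, B 0, X 0, Y 0) k).1)
    (hB : ∀ k, B k = (abxyTraj γ δ ξ (A 0, B 0, X 0, Y 0) k).2.1)
    (hX : ∀ k, X k = (abxyTraj γ δ ξ (A 0, B 0, X 0, Y 0) k).2.2.1)
    (hY : ∀ k, Y k = (abxyTraj γ δ ξ (A 0, B 0, X 0, Y 0) k).2.2.2)
    (hX0 : X 0 = A 0) (hY0 : Y 0 = B 0)
    (K : ℕ) (hXY : ∀ k ≤ K, Y k ≤ X k) :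
    ∀ k ≤ K, (X k : ℤ) - (Y k : ℤ) ≤ (A k : ℤ) - (B k : ℤ) := by
  have htraj : ∀ k, abxyTraj γ δ ξ (A 0, B 0, X 0, Y 0) k = (A k, B k, X k, Y k) := fun k => by
    rw [hA k, hB k, hX k, hY k]
  have hinv0 : CouplingInv (A 0, B 0, X 0, Y 0) := by
    simp only [CouplingInv, hX0, hY0]
    exact ⟨le_rfl, le_rfl, (Nat.mul_comm _ _).le⟩
  have hinv := CouplingInv.abxyTraj hγ.le hδ.le (fun k => (hξ k).1) hinv0
    (fun k hk => by simpa only [htraj] using hXY k hk)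
  intro k hk
  obtain ⟨-, hsum, -⟩ : CouplingInv (A k, B k, X k, Y k) := htraj k ▸ hinv k hk
  omega

/-- If `X 0 = A 0 ≥ B 0 = Y 0` and `X k ≥ Y k` for all `0 ≤ k ≤ K`, then
`X k - Y k ≤ A k - B k` (in `ℤ`) for all `0 ≤ k ≤ K`. -/
theorem ab_yule_coupling (γ δ : ℝ) (hγ : 0 < γ) (hδ : 0 < δ)
    (ξ : ℕ → ℝ) (hξ : ∀ k, 0 ≤ ξ k ∧ ξ k < 1)
    (A B X Y : ℕ → ℕ)
    (hA : ∀ k, A k = (abxyTraj γ δ ξ (A 0, B 0, X 0, Y 0) k).1)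
    (hB : ∀ k, B k = (abxyTraj γ δ ξ (A 0, B 0, X 0, Y 0) k).2.1)
    (hX : ∀ k, X k = (abxyTraj γ δ ξ (A 0, B 0, X 0, Y 0) k).2.2.1)
    (hY : ∀ k, Y k = (abxyTraj γ δ ξ (A 0, B 0, X 0, Y 0) k).2.2.2)
    (hX0 : X 0 = A 0) (hY0 : Y 0 = B 0) (h0 : B 0 ≤ A 0)
    (K : ℕ) (hXY : ∀ k ≤ K, Y k ≤ X k) :
    ∀ k ≤ K, (X k : ℤ) - (Y k : ℤ) ≤ (A k : ℤ) - (B k : ℤ) :=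
  ab_yule_coupling_general γ δ hγ hδ ξ hξ A B X Y hA hB hX hY hX0 hY0 K hXY
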